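/- For n ∈ ℕ define the family of subsets of {1,…,n}: M_n := { T ⊆ {1,…,n} : there exist a Fourier frequency ω ∈ F_n, s ∈ [0, √2], and δ = (δ₁,δ₂,δ₃) ∈ ℝ³ with ‖δ‖ = 1, such that T = { t ∈ {1,…,n} : 0 ≤ s ≤ δ₁ + δ₂ cos(ωt) + δ₃ sin(ωt) } }. Then the cardinality of M_n is at most (n+1)⁴. -/

import Mathlib

/-! Since `b cos x + c sin x = R cos (x - φ)`, the superlevel set `{x | s ≤ a + b cos x + c sin x}`
is, modulo `2π`, empty, the whole circle or a closed arc, and all three are of the form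
`{x | toIcoMod 2π 0 (x - θ) ≤ L}`. A nonempty set of points `ωt`, `t ∈ {1, …, n}`, cut out by such
an arc is also cut out by the arc running from its first point `ωu` to its last point `ωv`. Hence
every nonempty member of `M_n` is determined by `(j, u, v)`, giving at most
`1 + ⌊n/2⌋ n² ≤ (n+1)⁴` sets. -/

open scoped Classical

noncomputable section

/-- The family `M_n` of subsets of `{1, …, n}` cut out by the harmonic functions
`t ↦ δ₁ + δ₂ cos(ωt) + δ₃ sin(ωt)` at level `s`, over all Fourier frequencies
`ω ∈ F_n`, levels `s ∈ [0, √2]`, and unit vectors `δ ∈ ℝ³`. -/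
def Mset (n : ℕ) : Set (Finset ℕ) :=
  { T | ∃ j ∈ Finset.Icc 1 (n / 2), ∃ s ∈ Set.Icc (0 : ℝ) (Real.sqrt 2),
      ∃ δ : EuclideanSpace ℝ (Fin 3), ‖δ‖ = 1 ∧
        T = (Finset.Icc 1 n).filter fun t : ℕ =>
          0 ≤ s ∧ s ≤ δ 0 + δ 1 * Real.cos (2 * Real.pi * j / n * t)
            + δ 2 * Real.sin (2 * Real.pi * j / n * t) }

open Real Finset

section Circle

variable {p : ℝ} (hp : 0 < p)

lemma exists_forall_iff_toIcoMod_le (P : Prop) : ∃ L : ℝ, ∀ x, P ↔ toIcoMod hp 0 x ≤ L := by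
  by_cases hP : P
  · exact ⟨p, fun x => iff_of_true hP (by simpa using (toIcoMod_mem_Ico' hp x).2.le)⟩
  · exact ⟨-1, fun x => iff_of_false hP (by linarith [(toIcoMod_mem_Ico' hp x).1])⟩

lemma exists_filter_toIcoMod_le_eq {ι : Type*} (P : ι → ℝ) (I : Finset ι) (θ L : ℝ)
    (hT : (I.filter fun t => toIcoMod hp 0 (P t - θ) ≤ L).Nonempty) :
    ∃ u ∈ I, ∃ v ∈ I, (I.filter fun t => toIcoMod hp 0 (P t - θ) ≤ L) =
      I.filter fun t => toIcoMod hp 0 (P t - P u) ≤ toIcoMod hp 0 (P v - P u) := by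
  set g := fun t => toIcoMod hp 0 (P t - θ)
  set T := I.filter fun t => g t ≤ L
  have hg : ∀ t, g t ∈ Set.Ico 0 p := fun t => toIcoMod_mem_Ico' hp _
  have hshift : ∀ t w, toIcoMod hp 0 (P t - P w) = toIcoMod hp 0 (g t - g w) := fun t w =>
    (toIcoMod_eq_toIcoMod hp).2
      ⟨toIcoDiv hp 0 (P w - θ) - toIcoDiv hp 0 (P t - θ), by simp only [g, toIcoMod, sub_smul]; abel⟩
  obtain ⟨u, huT, hu⟩ := exists_min_image T g hT
  obtain ⟨v, hvT, hv⟩ := exists_max_image T g hT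
  have huI := (mem_filter.1 huT).1
  have hvL := (mem_filter.1 hvT).2
  have huv : toIcoMod hp 0 (g v - g u) = g v - g u :=
    (toIcoMod_eq_self hp).2 ⟨sub_nonneg.2 (hu v hvT), by linarith [(hg u).1, (hg v).2]⟩
  refine ⟨u, huI, v, (mem_filter.1 hvT).1, filter_congr fun t ht => ?_⟩
  rw [hshift, hshift v, huv]
  rcases le_or_gt (g u) (g t) with hut | htu
  · rw [(toIcoMod_eq_self hp).2 ⟨sub_nonneg.2 hut, by linarith [(hg u).1, (hg t).2]⟩]
    exact ⟨fun h => by linarith [hv t (mem_filter.2 ⟨ht, h⟩)], fun h => by linarith⟩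
  · have htT : t ∉ T := fun h => (hu t h).not_gt htu
    rw [← toIcoMod_add_right, (toIcoMod_eq_self hp).2 ⟨by linarith [(hg u).2, (hg t).1], by linarith⟩]
    exact iff_of_false (fun h => htT (mem_filter.2 ⟨ht, h⟩)) (by linarith [(hg t).1, (hg v).2])

end Circle

lemma cos_le_cos_iff_le_of_mem_Ico {α x : ℝ} (hα₀ : 0 ≤ α) (hαπ : α ≤ π)
    (hx : x ∈ Set.Ico (-α) (2 * π - α)) : cos α ≤ cos x ↔ x ≤ α := by
  have hdiff := cos_sub_cos x α
  constructor
  · intro h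
    by_contra! hlt
    have h₁ : 0 < sin ((x + α) / 2) := sin_pos_of_pos_of_lt_pi (by linarith) (by linarith [hx.2])
    have h₂ : 0 < sin ((x - α) / 2) := sin_pos_of_pos_of_lt_pi (by linarith) (by linarith [hx.2])
    nlinarith [mul_pos h₁ h₂]
  · intro h
    have h₁ : 0 ≤ sin ((x + α) / 2) :=
      sin_nonneg_of_nonneg_of_le_pi (by linarith [hx.1]) (by linarith)
    have h₂ : sin ((x - α) / 2) ≤ 0 :=
      sin_nonpos_of_nonpos_of_neg_pi_le (by linarith) (by linarith [hx.1])
    nlinarith [mul_nonneg h₁ (neg_nonneg.2 h₂)]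

lemma cos_le_cos_iff_toIcoMod_le {α : ℝ} (hα₀ : 0 ≤ α) (hαπ : α ≤ π) (y : ℝ) :
    cos α ≤ cos y ↔ toIcoMod two_pi_pos 0 (y + α) ≤ 2 * α := by
  set x := toIcoMod two_pi_pos (-α) y
  have hx : x ∈ Set.Ico (-α) (2 * π - α) := by
    simpa [sub_eq_neg_add, add_comm] using toIcoMod_mem_Ico two_pi_pos (-α) y
  have hcos : cos x = cos y := cos_periodic.sub_zsmul_eq _
  rw [toIcoMod_add_right_eq_add, zero_sub, ← hcos, cos_le_cos_iff_le_of_mem_Ico hα₀ hαπ hx]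
  constructor <;> intro <;> linarith

lemma exists_mul_cos_sub_eq (b c : ℝ) :
    ∃ R φ : ℝ, 0 ≤ R ∧ ∀ x, b * cos x + c * sin x = R * cos (x - φ) := by
  have hb : ‖(⟨b, c⟩ : ℂ)‖ * cos (Complex.arg ⟨b, c⟩) = b := Complex.norm_mul_cos_arg _
  have hc : ‖(⟨b, c⟩ : ℂ)‖ * sin (Complex.arg ⟨b, c⟩) = c := Complex.norm_mul_sin_arg _
  refine ⟨‖(⟨b, c⟩ : ℂ)‖, Complex.arg ⟨b, c⟩, norm_nonneg _, fun x => ?_⟩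
  rw [cos_sub]
  linear_combination -cos x * hb - sin x * hc

lemma exists_toIcoMod_le_iff_le_harmonic (a b c s : ℝ) :
    ∃ θ L : ℝ, ∀ x, s ≤ a + b * cos x + c * sin x ↔ toIcoMod two_pi_pos 0 (x - θ) ≤ L := by
  obtain ⟨R, φ, hR, hbc⟩ := exists_mul_cos_sub_eq b c
  rcases hR.eq_or_lt with rfl | hR
  · obtain ⟨L, hL⟩ := exists_forall_iff_toIcoMod_le two_pi_pos (s ≤ a)
    exact ⟨0, L, fun x => by rw [add_assoc, hbc, zero_mul, add_zero, sub_zero]; exact hL x⟩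
  set c₀ := (s - a) / R
  have hcond : ∀ x, s ≤ a + b * cos x + c * sin x ↔ c₀ ≤ cos (x - φ) := fun x => by
    rw [add_assoc, hbc, div_le_iff₀ hR]
    constructor <;> intro <;> linarith
  rcases lt_or_ge 1 c₀ with h1 | h1
  · obtain ⟨L, hL⟩ := exists_forall_iff_toIcoMod_le two_pi_pos False
    exact ⟨0, L, fun x => by
      rw [hcond, ← hL]; exact iff_false_intro ((cos_le_one _).trans_lt h1).not_ge⟩
  refine ⟨φ - arccos c₀, 2 * arccos c₀, fun x => ?_⟩
  rw [hcond, show x - (φ - arccos c₀) = x - φ + arccos c₀ by ring,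
    ← cos_le_cos_iff_toIcoMod_le (arccos_nonneg _) (arccos_le_pi _)]
  rcases le_or_gt (-1) c₀ with h2 | h2
  · rw [cos_arccos h2 h1]
  · rw [arccos_of_le_neg_one h2.le, cos_pi]
    exact iff_of_true (h2.le.trans (neg_one_le_cos _)) (neg_one_le_cos _)

def fourierArc (n j u v : ℕ) : Finset ℕ :=
  (Icc 1 n).filter fun t : ℕ =>
    toIcoMod two_pi_pos 0 (2 * π * j / n * t - 2 * π * j / n * u)
      ≤ toIcoMod two_pi_pos 0 (2 * π * j / n * v - 2 * π * j / n * u)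

def fourierArcs (n : ℕ) : Finset (Finset ℕ) :=
  (Icc 1 (n / 2) ×ˢ Icc 1 n ×ˢ Icc 1 n).image fun p => fourierArc n p.1 p.2.1 p.2.2

lemma card_fourierArcs_le (n : ℕ) : #(fourierArcs n) ≤ n / 2 * (n * n) :=
  card_image_le.trans (by simp)

lemma Mset_subset_insert_empty_fourierArcs (n : ℕ) : Mset n ⊆ ↑(insert ∅ (fourierArcs n)) := by
  rintro T ⟨j, hj, s, hs, δ, -, rfl⟩
  obtain ⟨θ, L, hθL⟩ := exists_toIcoMod_le_iff_le_harmonic (δ 0) (δ 1) (δ 2) s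
  rw [filter_congr fun t _ => (and_iff_right hs.1).trans (hθL _)]
  rcases eq_empty_or_nonempty ((Icc 1 n).filter fun t : ℕ =>
      toIcoMod two_pi_pos 0 (2 * π * j / n * t - θ) ≤ L) with h | h
  · simp [h]
  · obtain ⟨u, hu, v, hv, huv⟩ :=
      exists_filter_toIcoMod_le_eq two_pi_pos (fun t : ℕ => 2 * π * j / n * t) _ θ L h
    simp only [fourierArcs, coe_insert, Set.mem_insert_iff, mem_coe, mem_image]
    exact Or.inr ⟨(j, u, v), by simp [hj, hu, hv], huv.symm⟩

/-- Lemma A.10: the family `M_n` has cardinality at most `(n+1)⁴`. -/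
theorem statement18 (n : ℕ) : (Mset n).Finite ∧ (Mset n).ncard ≤ (n + 1) ^ 4 := by
  have hsub := Mset_subset_insert_empty_fourierArcs n
  refine ⟨(finite_toSet _).subset hsub, ?_⟩
  calc (Mset n).ncard ≤ #(insert ∅ (fourierArcs n)) :=
        (Set.ncard_le_ncard hsub (finite_toSet _)).trans (Set.ncard_coe_finset _).le
    _ ≤ n / 2 * (n * n) + 1 :=
        (card_insert_le _ _).trans (Nat.add_le_add_right (card_fourierArcs_le n) 1)
    _ ≤ n * (n * n) + 1 := by gcongr; exact Nat.div_le_self n 2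
    _ ≤ (n + 1) ^ 4 := by nlinarith
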